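/- Let α ∈ (0,1) and ρ' ∈ (0, (λ/γ)(1−α)/α). Suppose (ũ^k, ṽ^k)_{k≥1} ⊂ ℝ^n × ℝ^m satisfies, for every k ≥ 1: ũ^{k+1} ∈ prox_{αγ‖·‖₀}((1−α)ũ^k + αDṽ^k) and F(ũ^{k+1}, ṽ^{k+1}) − F(ũ^{k+1}, ṽ^k) ≤ (ρ'/2)‖ũ^{k+1} − ũ^k‖₂². Then: (a) F(ũ^{k+1}, ṽ^{k+1}) + (1/2)((λ/γ)(1−α)/α − ρ')‖ũ^{k+1} − ũ^k‖₂² ≤ F(ũ^k, ṽ^k) for all k, the sequence F(ũ^k, ṽ^k) is non-increasing and lim_{k→∞} F(ũ^k, ṽ^k) exists; and (b) lim_{k→∞} ‖ũ^{k+1} − ũ^k‖₂ = 0. -/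

import Mathlib

open Matrix Filter

noncomputable section

/-- Matrix–vector multiplication as a map between Euclidean spaces. -/
def mulVecE {n m : ℕ} (A : Matrix (Fin n) (Fin m) ℝ) (v : EuclideanSpace ℝ (Fin m)) :
    EuclideanSpace ℝ (Fin n) :=
  (EuclideanSpace.equiv (Fin n) ℝ).symm (A.mulVec ((EuclideanSpace.equiv (Fin m) ℝ) v))

/-- The `ℓ₀` "norm": the number of nonzero components, as a real number. -/
def l0 {n : ℕ} (u : EuclideanSpace ℝ (Fin n)) : ℝ := ({i : Fin n | u i ≠ 0}).ncard

/-- Membership `x ∈ prox_{t‖·‖₀}(y)`. -/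
def InProxL0 {n : ℕ} (t : ℝ) (x y : EuclideanSpace ℝ (Fin n)) : Prop :=
  ∀ z : EuclideanSpace ℝ (Fin n),
    (1 / (2 * t)) * ‖x - y‖ ^ 2 + l0 x ≤ (1 / (2 * t)) * ‖z - y‖ ^ 2 + l0 z

/-- The objective `F(u,v) = ψ(Bv) + (λ/(2γ))‖u − Dv‖₂² + λ‖u‖₀`. -/
def Fobj {n m p : ℕ} (ψ : EuclideanSpace ℝ (Fin p) → ℝ) (B : Matrix (Fin p) (Fin m) ℝ)
    (D : Matrix (Fin n) (Fin m) ℝ) (lam γ : ℝ) (u : EuclideanSpace ℝ (Fin n))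
    (v : EuclideanSpace ℝ (Fin m)) : ℝ :=
  ψ (mulVecE B v) + (lam / (2 * γ)) * ‖u - mulVecE D v‖ ^ 2 + lam * l0 u


/-! Comparing the prox step with the candidate `ũ^k` and expanding the convex combination
`(1 - α) ũ^k + α D ṽ^k` shows that the `u`-update decreases `F` by
`(λ/2γ)((1 - α)/α) ‖ũ^{k+1} - ũ^k‖²`; the inexact `v`-update gives back at most `ρ'/2` of this.
A sequence bounded below that decreases by a positive multiple of `d k ^ 2` at each step is
eventually antitone, converges, and has `d k → 0`. -/

theorem norm_sub_convex_comb_sq_sub_sq {E : Type*} [NormedAddCommGroup E] [InnerProductSpace ℝ E]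
    (x u w : E) (α : ℝ) :
    ‖x - ((1 - α) • u + α • w)‖ ^ 2 - ‖u - ((1 - α) • u + α • w)‖ ^ 2 =
      (1 - α) * ‖x - u‖ ^ 2 + α * (‖x - w‖ ^ 2 - ‖u - w‖ ^ 2) := by
  simp only [← real_inner_self_eq_norm_sq, inner_sub_left, inner_sub_right, inner_add_left,
    inner_add_right, real_inner_smul_left, real_inner_smul_right, real_inner_comm x u,
    real_inner_comm x w, real_inner_comm u w]
  ring

section SufficientDecrease

variable {f d : ℕ → ℝ} {c : ℝ}

theorem antitoneOn_of_add_sq_le (hc : 0 ≤ c) (hdec : ∀ k, 1 ≤ k → f (k + 1) + c * d k ^ 2 ≤ f k) :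
    AntitoneOn f {k | 1 ≤ k} :=
  antitoneOn_nat_Ici_of_succ_le fun k hk => by nlinarith [hdec k hk, sq_nonneg (d k)]

theorem exists_tendsto_of_add_sq_le (hc : 0 ≤ c)
    (hdec : ∀ k, 1 ≤ k → f (k + 1) + c * d k ^ 2 ≤ f k) (hbdd : BddBelow (Set.range f)) :
    ∃ L, Tendsto f atTop (nhds L) :=
  ⟨_, (tendsto_add_atTop_iff_nat 1).mp <| tendsto_atTop_ciInf
    (antitone_add_nat_iff_antitoneOn_nat_Ici.2 (antitoneOn_of_add_sq_le hc hdec))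
    (hbdd.mono (Set.range_comp_subset_range (· + 1) f))⟩

theorem tendsto_zero_of_add_sq_le (hc : 0 < c)
    (hdec : ∀ k, 1 ≤ k → f (k + 1) + c * d k ^ 2 ≤ f k) (hbdd : BddBelow (Set.range f)) :
    Tendsto d atTop (nhds 0) := by
  obtain ⟨L, hL⟩ := exists_tendsto_of_add_sq_le hc.le hdec hbdd
  have hgap : Tendsto (fun k => (f k - f (k + 1)) / c) atTop (nhds 0) := by
    simpa using (hL.sub (hL.comp (tendsto_add_atTop_nat 1))).div_const c
  have hsq : Tendsto (fun k => d k ^ 2) atTop (nhds 0) := by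
    refine squeeze_zero' (Eventually.of_forall fun k => sq_nonneg (d k)) ?_ hgap
    filter_upwards [eventually_ge_atTop 1] with k hk
    rw [le_div_iff₀ hc]
    linarith [hdec k hk]
  have habs : Tendsto (fun k => |d k|) atTop (nhds 0) := by
    simpa [Real.sqrt_sq_eq_abs] using hsq.sqrt
  exact (tendsto_zero_iff_abs_tendsto_zero d).2 habs

end SufficientDecrease

theorem Fobj_add_sq_le_of_inProxL0 {n m p : ℕ} (ψ : EuclideanSpace ℝ (Fin p) → ℝ)
    (B : Matrix (Fin p) (Fin m) ℝ) {D : Matrix (Fin n) (Fin m) ℝ} {lam γ α : ℝ}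
    {u u' : EuclideanSpace ℝ (Fin n)} {v : EuclideanSpace ℝ (Fin m)}
    (hα : α ≠ 0) (hlam : 0 ≤ lam)
    (hprox : InProxL0 (α * γ) u' ((1 - α) • u + α • mulVecE D v)) :
    Fobj ψ B D lam γ u' v + (1 / 2) * ((lam / γ) * ((1 - α) / α)) * ‖u' - u‖ ^ 2 ≤
      Fobj ψ B D lam γ u v := by
  set w := mulVecE D v
  have hscaled := mul_le_mul_of_nonneg_left (hprox u) hlam
  have hexpand : lam * (1 / (2 * (α * γ))) *
      (‖u' - ((1 - α) • u + α • w)‖ ^ 2 - ‖u - ((1 - α) • u + α • w)‖ ^ 2) =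
        (1 / 2) * ((lam / γ) * ((1 - α) / α)) * ‖u' - u‖ ^ 2 +
          lam / (2 * γ) * (‖u' - w‖ ^ 2 - ‖u - w‖ ^ 2) := by
    rw [norm_sub_convex_comb_sq_sub_sq]
    field_simp
  simp only [Fobj]
  linarith

theorem bddBelow_range_Fobj {n m p : ℕ} {ψ : EuclideanSpace ℝ (Fin p) → ℝ}
    (hψ : BddBelow (Set.range ψ)) (B : Matrix (Fin p) (Fin m) ℝ) (D : Matrix (Fin n) (Fin m) ℝ)
    {lam γ : ℝ} (hlam : 0 ≤ lam) (hγ : 0 ≤ γ) :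
    BddBelow (Set.range (Function.uncurry (Fobj ψ B D lam γ))) := by
  obtain ⟨c, hc⟩ := hψ
  refine ⟨c, ?_⟩
  rintro _ ⟨⟨x, y⟩, rfl⟩
  have hψc : c ≤ ψ (mulVecE B y) := hc ⟨_, rfl⟩
  have hl0 : 0 ≤ l0 x := Nat.cast_nonneg _
  simp only [Function.uncurry_apply_pair, Fobj]
  linarith [mul_nonneg hlam hl0, show 0 ≤ lam / (2 * γ) * ‖x - mulVecE D y‖ ^ 2 by positivity]

theorem stmt10_general (n m p : ℕ) (ψ : EuclideanSpace ℝ (Fin p) → ℝ)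
    (hbdd : BddBelow (Set.range ψ))
    (B : Matrix (Fin p) (Fin m) ℝ) (D : Matrix (Fin n) (Fin m) ℝ)
    (lam γ : ℝ) (hlam : 0 < lam) (hγ : 0 < γ)
    (α : ℝ) (hα0 : 0 < α)
    (ρ' : ℝ) (hρ'1 : ρ' < (lam / γ) * ((1 - α) / α))
    (u : ℕ → EuclideanSpace ℝ (Fin n)) (v : ℕ → EuclideanSpace ℝ (Fin m))
    (hprox : ∀ k, 1 ≤ k →
      InProxL0 (α * γ) (u (k + 1)) ((1 - α) • u k + α • mulVecE D (v k)))
    (hineq : ∀ k, 1 ≤ k →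
      Fobj ψ B D lam γ (u (k + 1)) (v (k + 1)) - Fobj ψ B D lam γ (u (k + 1)) (v k) ≤
        (ρ' / 2) * ‖u (k + 1) - u k‖ ^ 2) :
    (∀ k, 1 ≤ k →
      Fobj ψ B D lam γ (u (k + 1)) (v (k + 1)) +
          (1 / 2) * ((lam / γ) * ((1 - α) / α) - ρ') * ‖u (k + 1) - u k‖ ^ 2 ≤
        Fobj ψ B D lam γ (u k) (v k)) ∧
    (∀ k l, 1 ≤ k → k ≤ l →
      Fobj ψ B D lam γ (u l) (v l) ≤ Fobj ψ B D lam γ (u k) (v k)) ∧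
    (∃ L : ℝ, Tendsto (fun k => Fobj ψ B D lam γ (u k) (v k)) atTop (nhds L)) ∧
    Tendsto (fun k => ‖u (k + 1) - u k‖) atTop (nhds (0 : ℝ)) := by
  set F := fun k => Fobj ψ B D lam γ (u k) (v k)
  have hdec : ∀ k, 1 ≤ k →
      F (k + 1) + (1 / 2) * ((lam / γ) * ((1 - α) / α) - ρ') * ‖u (k + 1) - u k‖ ^ 2 ≤ F k :=
    fun k hk => by
      simp only [F]
      linarith [Fobj_add_sq_le_of_inProxL0 ψ B hα0.ne' hlam.le (hprox k hk), hineq k hk]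
  have hc : 0 < (1 / 2) * ((lam / γ) * ((1 - α) / α) - ρ') := by linarith
  have hFbdd : BddBelow (Set.range F) :=
    (bddBelow_range_Fobj hbdd B D hlam.le hγ.le).mono
      (Set.range_subset_iff.2 fun k => Set.mem_range_self (u k, v k))
  exact ⟨hdec, fun k l hk hkl => antitoneOn_of_add_sq_le hc.le hdec hk (hk.trans hkl) hkl,
    exists_tendsto_of_add_sq_le hc.le hdec hFbdd, tendsto_zero_of_add_sq_le hc hdec hFbdd⟩

/-- **Lemma 5 of the paper.** For the inexact iterates satisfying the
prox step and the inexactness condition with `ρ' ∈ (0, (λ/γ)(1−α)/α)`: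
(a) `F(ũ^{k+1}, ṽ^{k+1}) + (1/2)((λ/γ)(1−α)/α − ρ')‖ũ^{k+1} − ũ^k‖₂² ≤ F(ũ^k, ṽ^k)`,
the values `F(ũ^k, ṽ^k)` are non-increasing and converge; and
(b) `‖ũ^{k+1} − ũ^k‖₂ → 0`. -/
theorem stmt10 (n m p : ℕ) (ψ : EuclideanSpace ℝ (Fin p) → ℝ)
    (hconv : ConvexOn ℝ Set.univ ψ) (hdiff : ContDiff ℝ 1 ψ)
    (hbdd : BddBelow (Set.range ψ))
    (B : Matrix (Fin p) (Fin m) ℝ) (D : Matrix (Fin n) (Fin m) ℝ) (hD : Dᵀ * D = 1)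
    (lam γ : ℝ) (hlam : 0 < lam) (hγ : 0 < γ)
    (α : ℝ) (hα0 : 0 < α) (hα1 : α < 1)
    (ρ' : ℝ) (hρ'0 : 0 < ρ') (hρ'1 : ρ' < (lam / γ) * ((1 - α) / α))
    (u : ℕ → EuclideanSpace ℝ (Fin n)) (v : ℕ → EuclideanSpace ℝ (Fin m))
    (hprox : ∀ k, 1 ≤ k →
      InProxL0 (α * γ) (u (k + 1)) ((1 - α) • u k + α • mulVecE D (v k)))
    (hineq : ∀ k, 1 ≤ k →
      Fobj ψ B D lam γ (u (k + 1)) (v (k + 1)) - Fobj ψ B D lam γ (u (k + 1)) (v k) ≤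
        (ρ' / 2) * ‖u (k + 1) - u k‖ ^ 2) :
    (∀ k, 1 ≤ k →
      Fobj ψ B D lam γ (u (k + 1)) (v (k + 1)) +
          (1 / 2) * ((lam / γ) * ((1 - α) / α) - ρ') * ‖u (k + 1) - u k‖ ^ 2 ≤
        Fobj ψ B D lam γ (u k) (v k)) ∧
    (∀ k l, 1 ≤ k → k ≤ l →
      Fobj ψ B D lam γ (u l) (v l) ≤ Fobj ψ B D lam γ (u k) (v k)) ∧
    (∃ L : ℝ, Tendsto (fun k => Fobj ψ B D lam γ (u k) (v k)) atTop (nhds L)) ∧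
    Tendsto (fun k => ‖u (k + 1) - u k‖) atTop (nhds (0 : ℝ)) :=
  stmt10_general n m p ψ hbdd B D lam γ hlam hγ α hα0 ρ' hρ'1 u v hprox hineq

end
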